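/- Let p(s) = s³-3s²+1, q(s) = s³-s²+s, and f₂(x,y) = p(y)x + q(y). Then the curves f₂(x,y) = 0 and f₂(y,x) = 0 have intersection multiplicity exactly 3 at each of the three points (0,0), (1,1), (-1,-1). -/

import Mathlib

/-!
Near each of the three points p(y) is a unit, so f₂(x,y) = 0 can be solved as x = -q(y)/p(y).
Substituting this into f₂(y,x) and clearing denominators leaves a polynomial in y alone,
-3 (y-2) y³ (y-1)³ (y+1)³, which vanishes to order exactly 3 at y = a. Hence the local ring
modulo (f₂(x,y), f₂(y,x)) is ℂ[T]/((T-a)³): the isomorphism sends y to T and x to -q(T)/p(T),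
and its inverse sends T to y.
-/

noncomputable section

open MvPolynomial

/-- The polynomial ring ℂ[x,y]. -/
abbrev R2 : Type := MvPolynomial (Fin 2) ℂ

/-- f₂(x,y) = p(y)x + q(y) with p(s) = s³-3s²+1, q(s) = s³-s²+s. -/
noncomputable def f2 : R2 :=
  ((X 1)^3 - 3*(X 1)^2 + 1) * X 0 + ((X 1)^3 - (X 1)^2 + X 1)

/-- f₂(y,x), i.e. f₂ with the two variables swapped. -/
noncomputable def f2s : R2 :=
  ((X 0)^3 - 3*(X 0)^2 + 1) * X 1 + ((X 0)^3 - (X 0)^2 + X 0)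

open scoped Polynomial

theorem MvPolynomial.ker_aeval_le {R σ : Type*} [CommRing R] (x : σ → R)
    {I : Ideal (MvPolynomial σ R)} (hI : ∀ i, X i - C (x i) ∈ I) :
    RingHom.ker (aeval x) ≤ I := by
  have hcomp : Ideal.Quotient.mkₐ R I = (Algebra.ofId R _).comp (aeval x) := by
    ext i
    rw [AlgHom.comp_apply, aeval_X, Ideal.Quotient.mkₐ_eq_mk, Algebra.ofId_apply,
      ← Ideal.Quotient.mk_algebraMap, Ideal.Quotient.mk_eq_mk_iff_sub_mem]
    exact hI i
  intro p hp
  rw [← Ideal.Quotient.eq_zero_iff_mem, ← Ideal.Quotient.mkₐ_eq_mk R, hcomp,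
    AlgHom.comp_apply, RingHom.mem_ker.mp hp, map_zero]

theorem MvPolynomial.span_X_sub_C_pair_eq_ker {R : Type*} [CommRing R] (b a : R) :
    Ideal.span {X 0 - C b, X 1 - C a} =
      RingHom.ker (aeval ![b, a] : MvPolynomial (Fin 2) R →ₐ[R] R) := by
  refine le_antisymm ?_ (ker_aeval_le _ fun i => ?_)
  · rw [Ideal.span_le]
    rintro p (rfl | rfl) <;> simp
  · fin_cases i <;> exact Ideal.subset_span (by simp)

theorem MvPolynomial.isUnit_apply_of_isNilpotent_X_sub {R A σ : Type*} [CommRing R]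
    [CommRing A] [Algebra R A] (φ : MvPolynomial σ R →ₐ[R] A) (x : σ → R)
    (hφ : ∀ i, IsNilpotent (φ (X i) - algebraMap R A (x i))) {s : MvPolynomial σ R}
    (hs : IsUnit (aeval x s)) : IsUnit (φ s) := by
  have hker : RingHom.ker (aeval x) ≤ (nilradical A).comap φ :=
    ker_aeval_le x fun i => by simpa [mem_nilradical] using hφ i
  have hnil : IsNilpotent (φ s - algebraMap R A (aeval x s)) := by
    simpa [mem_nilradical] using hker (show s - C (aeval x s) ∈ RingHom.ker (aeval x) by simp)
  simpa using hnil.isUnit_add_left_of_commute (hs.map (algebraMap R A)) (Commute.all _ _)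

namespace AdjoinRoot

variable {R : Type*} [CommRing R] {a : R} {n : ℕ}

theorem isNilpotent_mk_X_sub_C_pow {r : R[X]} (hr : r.IsRoot a) :
    IsNilpotent (mk ((Polynomial.X - Polynomial.C a) ^ n) r) := by
  obtain ⟨t, rfl⟩ := Polynomial.dvd_iff_isRoot.mpr hr
  rw [map_mul]
  exact (Commute.all _ _).isNilpotent_mul_right ⟨n, by rw [← map_pow, mk_self]⟩

theorem isUnit_mk_X_sub_C_pow {r : R[X]} (hr : IsUnit (r.eval a)) :
    IsUnit (mk ((Polynomial.X - Polynomial.C a) ^ n) r) := by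
  have hnil : IsNilpotent (mk ((Polynomial.X - Polynomial.C a) ^ n)
      (r - Polynomial.C (r.eval a))) :=
    isNilpotent_mk_X_sub_C_pow (by simp)
  simpa [mk_C] using hnil.isUnit_add_left_of_commute (hr.map (algebraMap R _)) (Commute.all _ _)

theorem finrank_X_sub_C_pow {K : Type*} [Field K] (a : K) (n : ℕ) :
    Module.finrank K (AdjoinRoot ((Polynomial.X - Polynomial.C a) ^ n)) = n := by
  rw [(powerBasis (pow_ne_zero n (Polynomial.X_sub_C_ne_zero a))).finrank, powerBasis_dim,
    Polynomial.natDegree_pow, Polynomial.natDegree_X_sub_C, mul_one]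

end AdjoinRoot

section LocalQuotient

variable {K R B : Type*} [CommRing K] [CommRing R] [Algebra K R] [CommRing B] [Algebra K B]
  (m : Ideal R) [m.IsPrime] (I : Ideal R)

abbrev LocalQuotient : Type _ :=
  Localization.AtPrime m ⧸ I.map (algebraMap R (Localization.AtPrime m))

namespace LocalQuotient

variable {m I}

theorem isUnit_algebraMap {s : R} (hs : s ∉ m) : IsUnit (algebraMap R (LocalQuotient m I) s) :=
  (IsLocalization.map_units (Localization.AtPrime m) (⟨s, hs⟩ : m.primeCompl)).map
    (Ideal.Quotient.mk _)

theorem algebraMap_eq_zero {s : R} (hs : s ∈ I) : algebraMap R (LocalQuotient m I) s = 0 :=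
  Ideal.Quotient.eq_zero_iff_mem.mpr (Ideal.mem_map_of_mem _ hs)

variable (φ : R →ₐ[K] B) (hunit : ∀ s ∉ m, IsUnit (φ s)) (hI : I ≤ RingHom.ker φ)

def liftₐ : LocalQuotient m I →ₐ[K] B :=
  let φloc := IsLocalization.liftAlgHom (M := m.primeCompl) (S := Localization.AtPrime m) (f := φ)
    fun s => hunit s (Ideal.mem_primeCompl_iff.mp s.2)
  have hker : I.map (algebraMap R _) ≤ RingHom.ker φloc := Ideal.map_le_iff_le_comap.mpr
    fun s hs => by simpa [φloc, IsLocalization.lift_eq] using hI hs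
  Ideal.Quotient.liftₐ _ φloc fun _ hz => hker hz

theorem liftₐ_algebraMap (s : R) : liftₐ φ hunit hI (algebraMap R _ s) = φ s :=
  IsLocalization.lift_eq _ s

theorem algHom_ext {ψ₁ ψ₂ : LocalQuotient m I →ₐ[K] B}
    (h : ∀ s, ψ₁ (algebraMap R _ s) = ψ₂ (algebraMap R _ s)) : ψ₁ = ψ₂ :=
  Ideal.Quotient.algHom_ext K (IsLocalization.algHom_ext m.primeCompl (AlgHom.ext h))

end LocalQuotient

end LocalQuotient

section BranchJet

variable {K : Type*} [Field K]

def polyInY : K[X] →ₐ[K] MvPolynomial (Fin 2) K := Polynomial.aeval (X 1)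

theorem aeval_polyInY (x : Fin 2 → K) (p : K[X]) : aeval x (polyInY p) = p.eval (x 1) := by
  rw [polyInY, ← Polynomial.aeval_algHom_apply, aeval_X, Polynomial.coe_aeval_eq_eval]

/-- `Ring.inverse` is a genuine inverse here only when `P.eval a ≠ 0`. -/
def branchJet (P Q : K[X]) (a : K) (n : ℕ) :
    MvPolynomial (Fin 2) K →ₐ[K] AdjoinRoot ((Polynomial.X - Polynomial.C a) ^ n) :=
  aeval ![-(Ring.inverse (AdjoinRoot.mk _ P) * AdjoinRoot.mk _ Q), AdjoinRoot.root _]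

variable {P Q U : K[X]} {a : K} {n k : ℕ} {g : MvPolynomial (Fin 2) K}

theorem branchJet_X_one : branchJet P Q a n (X 1) = AdjoinRoot.root _ := by
  simp [branchJet]

theorem branchJet_polyInY (p : K[X]) : branchJet P Q a n (polyInY p) = AdjoinRoot.mk _ p := by
  rw [polyInY, ← Polynomial.aeval_algHom_apply, branchJet_X_one, AdjoinRoot.aeval_eq]

theorem mk_mul_branchJet_X_zero (hP : P.eval a ≠ 0) :
    AdjoinRoot.mk _ P * branchJet P Q a n (X 0) = -AdjoinRoot.mk _ Q := by
  simp only [branchJet, aeval_X, Matrix.cons_val_zero]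
  rw [mul_neg, ← mul_assoc,
    Ring.mul_inverse_cancel _ (AdjoinRoot.isUnit_mk_X_sub_C_pow (Ne.isUnit hP)), one_mul]

theorem isUnit_branchJet {b : K} (hP : P.eval a ≠ 0) (hb : P.eval a * b + Q.eval a = 0)
    {s : MvPolynomial (Fin 2) K} (hs : aeval ![b, a] s ≠ 0) : IsUnit (branchJet P Q a n s) := by
  refine isUnit_apply_of_isNilpotent_X_sub _ ![b, a] (fun i => ?_) (Ne.isUnit hs)
  fin_cases i
  · have hPu := AdjoinRoot.isUnit_mk_X_sub_C_pow (n := n) (Ne.isUnit hP)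
    have hroot : (Q + Polynomial.C b * P).IsRoot a := by
      simp only [Polynomial.IsRoot, Polynomial.eval_add, Polynomial.eval_mul, Polynomial.eval_C]
      linear_combination hb
    have hsub : branchJet P Q a n (X 0) - algebraMap K _ b
        = -(Ring.inverse (AdjoinRoot.mk _ P) * AdjoinRoot.mk _ (Q + Polynomial.C b * P)) := by
      refine hPu.mul_left_cancel ?_
      rw [mul_sub, mk_mul_branchJet_X_zero hP, mul_neg, ← mul_assoc,
        Ring.mul_inverse_cancel _ hPu, one_mul, map_add, map_mul, AdjoinRoot.mk_C,
        AdjoinRoot.algebraMap_eq]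
      ring
    rw [Fin.zero_eta, Matrix.cons_val_zero, hsub]
    exact ((Commute.all _ _).isNilpotent_mul_left
      (AdjoinRoot.isNilpotent_mk_X_sub_C_pow hroot)).neg
  · have h := AdjoinRoot.isNilpotent_mk_X_sub_C_pow (n := n)
      (Polynomial.root_X_sub_C.mpr (rfl : a = a))
    rw [map_sub, AdjoinRoot.mk_X, AdjoinRoot.mk_C] at h
    simpa [branchJet_X_one, AdjoinRoot.algebraMap_eq] using h

theorem branchJet_eq_zero_of_mem_span (hP : P.eval a ≠ 0) {f : MvPolynomial (Fin 2) K}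
    (hf : f ∈ Ideal.span {polyInY P * X 0 + polyInY Q}) : branchJet P Q a n f = 0 := by
  obtain ⟨c, rfl⟩ := Ideal.mem_span_singleton'.mp hf
  rw [map_mul, map_add, map_mul, branchJet_polyInY, branchJet_polyInY,
    mk_mul_branchJet_X_zero hP, neg_add_cancel, mul_zero]

theorem branchJet_eq_zero (hP : P.eval a ≠ 0)
    (hg : polyInY P ^ k * g - polyInY ((Polynomial.X - Polynomial.C a) ^ n * U)
      ∈ Ideal.span {polyInY P * X 0 + polyInY Q}) :
    branchJet P Q a n g = 0 := by
  have h := branchJet_eq_zero_of_mem_span (n := n) hP hg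
  rwa [map_sub, map_mul, map_pow, branchJet_polyInY, branchJet_polyInY, map_mul,
    AdjoinRoot.mk_self, zero_mul, sub_zero,
    ((AdjoinRoot.isUnit_mk_X_sub_C_pow (Ne.isUnit hP)).pow k).mul_right_eq_zero] at h

variable {A : Type*} [CommRing A] [Algebra K A] (π : MvPolynomial (Fin 2) K →ₐ[K] A)

theorem aeval_X_sub_C_pow_eq_zero (hU : IsUnit (π (polyInY U)))
    (hg : polyInY P ^ k * g - polyInY ((Polynomial.X - Polynomial.C a) ^ n * U)
      ∈ Ideal.span {polyInY P * X 0 + polyInY Q})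
    (hπf : π (polyInY P * X 0 + polyInY Q) = 0) (hπg : π g = 0) :
    Polynomial.aeval (π (X 1)) ((Polynomial.X - Polynomial.C a) ^ n) = 0 := by
  obtain ⟨c, hc⟩ := Ideal.mem_span_singleton'.mp hg
  have h := congrArg π hc
  rw [map_mul, hπf, mul_zero, map_sub, map_mul, hπg, mul_zero, zero_sub, eq_comm, neg_eq_zero,
    map_mul, map_mul, hU.mul_left_eq_zero, polyInY, ← Polynomial.aeval_algHom_apply] at h
  exact h

theorem algHom_comp_branchJet (hP : P.eval a ≠ 0) (hπf : π (polyInY P * X 0 + polyInY Q) = 0)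
    (hπP : IsUnit (π (polyInY P)))
    (F : AdjoinRoot ((Polynomial.X - Polynomial.C a) ^ n) →ₐ[K] A)
    (hF : F (AdjoinRoot.root _) = π (X 1)) :
    F.comp (branchJet P Q a n) = π := by
  have hFmk : ∀ p : K[X], F (AdjoinRoot.mk _ p) = π (polyInY p) := fun p => by
    rw [← AdjoinRoot.aeval_eq, ← Polynomial.aeval_algHom_apply, hF, polyInY,
      Polynomial.aeval_algHom_apply]
  refine MvPolynomial.algHom_ext fun i => ?_
  fin_cases i
  · refine hπP.mul_left_cancel ?_
    have h := congrArg F (mk_mul_branchJet_X_zero (n := n) (Q := Q) hP)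
    rw [map_mul, map_neg, hFmk, hFmk] at h
    rw [map_add, map_mul] at hπf
    rw [Fin.zero_eta, AlgHom.comp_apply, h]
    linear_combination -hπf
  · simpa [branchJet_X_one] using hF

end BranchJet

theorem finrank_localQuotient_eq {K : Type*} [Field K] {P Q U : K[X]} {a b : K} {n k : ℕ}
    {g : MvPolynomial (Fin 2) K} (hP : P.eval a ≠ 0) (hb : P.eval a * b + Q.eval a = 0)
    (hU : U.eval a ≠ 0)
    (hg : polyInY P ^ k * g - polyInY ((Polynomial.X - Polynomial.C a) ^ n * U)
      ∈ Ideal.span {polyInY P * X 0 + polyInY Q})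
    (m : Ideal (MvPolynomial (Fin 2) K)) [m.IsPrime]
    (hm : m = Ideal.span {X 0 - C b, X 1 - C a}) :
    Module.finrank K (LocalQuotient m (Ideal.span {polyInY P * X 0 + polyInY Q, g})) = n := by
  have hm' : ∀ s, s ∈ m ↔ aeval ![b, a] s = 0 := fun s => by
    rw [hm, span_X_sub_C_pair_eq_ker, RingHom.mem_ker]
  let π : MvPolynomial (Fin 2) K →ₐ[K]
      LocalQuotient m (Ideal.span {polyInY P * X 0 + polyInY Q, g}) :=
    IsScalarTower.toAlgHom K _ _
  have hπ_unit : ∀ p : K[X], p.eval a ≠ 0 → IsUnit (π (polyInY p)) := fun p hp =>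
    LocalQuotient.isUnit_algebraMap (by rwa [hm', aeval_polyInY])
  have hπf : π (polyInY P * X 0 + polyInY Q) = 0 :=
    LocalQuotient.algebraMap_eq_zero (Ideal.subset_span (by simp))
  have hπg : π g = 0 := LocalQuotient.algebraMap_eq_zero (Ideal.subset_span (by simp))
  have hker : Ideal.span {polyInY P * X 0 + polyInY Q, g} ≤ RingHom.ker (branchJet P Q a n) := by
    rw [Ideal.span_le]
    rintro s (rfl | rfl)
    · exact branchJet_eq_zero_of_mem_span hP (Ideal.mem_span_singleton_self _)
    · exact branchJet_eq_zero hP hg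
  let G := LocalQuotient.liftₐ (branchJet P Q a n)
    (fun s hs => isUnit_branchJet hP hb (by rwa [hm'] at hs)) hker
  let F := AdjoinRoot.liftAlgHom _ (Algebra.ofId K _) (π (X 1))
    (aeval_X_sub_C_pow_eq_zero π (hπ_unit U hU) hg hπf hπg)
  have hFroot : F (AdjoinRoot.root _) = π (X 1) := AdjoinRoot.liftAlgHom_root _ _ _ _
  have hFπ : F.comp (branchJet P Q a n) = π :=
    algHom_comp_branchJet π hP hπf (hπ_unit P hP) F hFroot
  have hFG : F.comp G = AlgHom.id K _ := LocalQuotient.algHom_ext fun s => by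
    rw [AlgHom.comp_apply, LocalQuotient.liftₐ_algebraMap, ← AlgHom.comp_apply, hFπ]
    rfl
  have hGF : G.comp F = AlgHom.id K _ := AdjoinRoot.algHom_ext <| by
    rw [AlgHom.comp_apply, hFroot]
    exact (LocalQuotient.liftₐ_algebraMap _ _ _ _).trans branchJet_X_one
  rw [(AlgEquiv.ofAlgHom G F hGF hFG).toLinearEquiv.finrank_eq, AdjoinRoot.finrank_X_sub_C_pow]

def pPoly : ℂ[X] := Polynomial.X ^ 3 - 3 * Polynomial.X ^ 2 + 1

def qPoly : ℂ[X] := Polynomial.X ^ 3 - Polynomial.X ^ 2 + Polynomial.X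

/-- `p(y)³ f₂(y, -q(y)/p(y))`, the result of eliminating `x` from `f₂(x,y) = f₂(y,x) = 0`. -/
def eliminant : ℂ[X] :=
  -3 * (Polynomial.X - 2) * (Polynomial.X * (Polynomial.X - 1) * (Polynomial.X + 1)) ^ 3

theorem f2_eq : f2 = polyInY pPoly * X 0 + polyInY qPoly := by
  simp [f2, polyInY, pPoly, qPoly, map_ofNat]

theorem pPoly_cube_mul_f2s_sub_mem :
    polyInY pPoly ^ 3 * f2s - polyInY eliminant ∈ Ideal.span {f2} := by
  set p := polyInY pPoly
  set q := polyInY qPoly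
  -- with u = p(y)·x = f₂ - q(y), the difference is a polynomial in u that vanishes at u = -q(y)
  refine Ideal.mem_span_singleton'.mpr
    ⟨X 1 * ((p * X 0) ^ 2 - p * X 0 * q + q ^ 2 - 3 * p * (p * X 0 - q))
      + (p * X 0) ^ 2 - p * X 0 * q + q ^ 2 - p * (p * X 0 - q) + p ^ 2, ?_⟩
  simp [p, q, f2, f2s, polyInY, pPoly, qPoly, eliminant, map_ofNat]
  ring

section DiagonalPoints

variable {a : ℂ}

theorem pPoly_eval_ne_zero (ha : a ∈ ({0, 1, -1} : Set ℂ)) : pPoly.eval a ≠ 0 := by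
  rcases ha with rfl | rfl | rfl <;> norm_num [pPoly]

theorem pPoly_eval_mul_add_qPoly_eval (ha : a ∈ ({0, 1, -1} : Set ℂ)) :
    pPoly.eval a * a + qPoly.eval a = 0 := by
  rcases ha with rfl | rfl | rfl <;> norm_num [pPoly, qPoly]

theorem exists_eliminant_eq_X_sub_C_pow_three_mul (ha : a ∈ ({0, 1, -1} : Set ℂ)) :
    ∃ U : ℂ[X], eliminant = (Polynomial.X - Polynomial.C a) ^ 3 * U ∧ U.eval a ≠ 0 := by
  rcases ha with rfl | rfl | rfl
  · exact ⟨-3 * (Polynomial.X - 2) * ((Polynomial.X - 1) * (Polynomial.X + 1)) ^ 3,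
      by simp [eliminant]; ring, by norm_num⟩
  · exact ⟨-3 * (Polynomial.X - 2) * (Polynomial.X * (Polynomial.X + 1)) ^ 3,
      by simp [eliminant]; ring, by norm_num⟩
  · exact ⟨-3 * (Polynomial.X - 2) * (Polynomial.X * (Polynomial.X - 1)) ^ 3,
      by simp [eliminant]; ring, by norm_num⟩

end DiagonalPoints

theorem stmt_12 :
    ∀ a : ℂ, a ∈ ({0, 1, -1} : Set ℂ) →
      ∀ (m : Ideal R2), m = Ideal.span {X 0 - C a, X 1 - C a} →
      ∀ (_ : m.IsPrime),
        Module.finrank ℂ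
          ((Localization.AtPrime m) ⧸
            Ideal.map (algebraMap R2 (Localization.AtPrime m))
              (Ideal.span {f2, f2s})) = 3 := by
  intro a ha m hm _
  obtain ⟨U, hH, hU⟩ := exists_eliminant_eq_X_sub_C_pow_three_mul ha
  have hg := pPoly_cube_mul_f2s_sub_mem
  rw [hH, f2_eq] at hg
  rw [f2_eq]
  exact finrank_localQuotient_eq (pPoly_eval_ne_zero ha) (pPoly_eval_mul_add_qPoly_eval ha) hU hg
    m hm
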